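/- Let G be a subgroup of GL(V) for a finite-dimensional complex vector space V. If there exists a positive integer l such that g^l = 1 for every g ∈ G, then G is a finite group. -/

import Mathlib

open Polynomial Matrix

lemma rootsfin (l : ℕ) (hl : 0 < l) : {z : ℂ | z ^ l = 1}.Finite := by
  have hne : (X ^ l - C 1 : ℂ[X]) ≠ 0 := by
    intro hc
    have := congrArg natDegree hc
    rw [natDegree_X_pow_sub_C] at this
    simp at this; omega
  apply (Polynomial.finite_setOf_isRoot hne).subset
  intro z hz
  simp only [Set.mem_setOf_eq] at hz ⊢
  simp [IsRoot, hz]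

lemma charpoly_root_pow {n l : ℕ} (M : Matrix (Fin n) (Fin n) ℂ) (hM : M ^ l = 1)
    {z : ℂ} (hz : z ∈ M.charpoly.roots) : z ^ l = 1 := by
  have hroot : M.charpoly.IsRoot z := isRoot_of_mem_roots hz
  have hmap : (charmatrix M).map (evalRingHom z) = Matrix.scalar (Fin n) z - M := by
    ext i j
    by_cases hij : i = j
    · subst hij
      simp [charmatrix_apply_eq]
    · simp [charmatrix_apply_ne _ _ _ hij, Matrix.scalar_apply, Matrix.diagonal_apply_ne _ hij]
  have hdet : (Matrix.scalar (Fin n) z - M).det = 0 := by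
    rw [← hmap]
    have h3 := (RingHom.map_det (evalRingHom z) (charmatrix M)).symm
    rw [RingHom.mapMatrix_apply] at h3
    rw [h3]
    exact hroot
  obtain ⟨v, hv0, hv⟩ := (Matrix.exists_mulVec_eq_zero_iff).mpr hdet
  have hMv : M.mulVec v = z • v := by
    have h1 : (Matrix.scalar (Fin n) z).mulVec v - M.mulVec v = 0 := by
      rw [← Matrix.sub_mulVec]; exact hv
    have h2 : (Matrix.scalar (Fin n) z).mulVec v = z • v := by
      ext i; simp [Matrix.scalar, Matrix.mulVec_diagonal]
    rw [h2, sub_eq_zero] at h1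
    exact h1.symm
  have key : ∀ k : ℕ, (M ^ k).mulVec v = z ^ k • v := by
    intro k
    induction k with
    | zero => simp
    | succ k ih =>
      rw [pow_succ', pow_succ', ← Matrix.mulVec_mulVec, ih, Matrix.mulVec_smul, hMv,
        smul_smul, mul_comm]
  have hkey := key l
  rw [hM, Matrix.one_mulVec] at hkey
  obtain ⟨i, hi⟩ := Function.ne_iff.mp hv0
  have heq : v i = (z ^ l) * v i := by
    conv_lhs => rw [hkey]; rfl
    simp
  have : (z ^ l - 1) * v i = 0 := by ring_nf; linear_combination -heq
  rcases mul_eq_zero.mp this with h1 | h2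
  · exact sub_eq_zero.mp h1
  · exact absurd h2 (by simpa using hi)

lemma trace_mem_range {n l : ℕ} (M : Matrix (Fin n) (Fin n) ℂ) (hM : M ^ l = 1) :
    M.trace ∈ Set.range (fun f : Fin n → {z : ℂ // z ^ l = 1} => ∑ i, (f i : ℂ)) := by
  have hsplit : M.charpoly.Splits := IsAlgClosed.splits M.charpoly
  have hcard : M.charpoly.roots.card = n := by
    rw [(Polynomial.splits_iff_card_roots).mp hsplit, charpoly_natDegree_eq_dim,
      Fintype.card_fin]
  set L := M.charpoly.roots.toList with hL
  have hlen : L.length = n := by rw [hL, Multiset.length_toList, hcard]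
  have hmem : ∀ i : Fin L.length, (L.get i) ^ l = 1 := by
    intro i
    have : L.get i ∈ M.charpoly.roots := by
      rw [← Multiset.mem_toList]; exact L.get_mem i
    exact charpoly_root_pow M hM this
  refine ⟨fun i => ⟨L.get (Fin.cast hlen.symm i), hmem _⟩, ?_⟩
  have h1 : M.trace = L.sum := by
    rw [Matrix.trace_eq_sum_roots_charpoly, hL, Multiset.sum_toList]
  have h2 : L.sum = ∑ i : Fin L.length, L.get i := by
    conv_lhs => rw [← List.ofFn_get L]
    rw [List.sum_ofFn]
  simp only
  rw [h1, h2]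
  exact Fintype.sum_equiv (finCongr hlen.symm) _ _ (fun i => rfl)

lemma multiset_all_one {s : Multiset ℂ} {n : ℕ} (hcard : s.card = n)
    (habs : ∀ z ∈ s, ‖z‖ = 1) (hsum : s.sum = n) : ∀ z ∈ s, z = 1 := by
  intro z hz
  by_contra hz1
  obtain ⟨t, rfl⟩ := Multiset.exists_cons_of_mem hz
  have htcard : t.card = n - 1 := by
    have := hcard; rw [Multiset.card_cons] at this; omega
  have hn1 : 1 ≤ n := by
    have := hcard; rw [Multiset.card_cons] at this; omega
  have hre : ∀ w ∈ z ::ₘ t, w.re ≤ 1 := by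
    intro w hw
    calc w.re ≤ ‖w‖ := Complex.re_le_norm w
    _ = 1 := habs w hw
  have hrez : z.re < 1 := by
    rcases lt_or_eq_of_le (hre z (Multiset.mem_cons_self z t)) with h | h
    · exact h
    · exfalso
      apply hz1
      have habsz := habs z (Multiset.mem_cons_self z t)
      have him : z.im = 0 := by
        have h2 : ‖z‖ ^ 2 = z.re ^ 2 + z.im ^ 2 := by
          rw [Complex.sq_norm, Complex.normSq_apply]; ring
        rw [habsz, h] at h2
        nlinarith
      apply Complex.ext <;> simp [h, him]
  have hts : ((z ::ₘ t).map Complex.re).sum = (n : ℝ) := by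
    have : ((z ::ₘ t).map Complex.re).sum = ((z ::ₘ t).sum).re := by
      exact (Complex.reAddGroupHom.map_multiset_sum (z ::ₘ t)).symm ▸ rfl
    rw [this, hsum]
    simp
  have htsum : (t.map Complex.re).sum ≤ (t.card : ℝ) := by
    have := Multiset.sum_le_card_nsmul (t.map Complex.re) 1 (by
      intro x hx
      obtain ⟨w, hw, rfl⟩ := Multiset.mem_map.mp hx
      exact hre w (Multiset.mem_cons_of_mem hw))
    simpa using this
  rw [Multiset.map_cons, Multiset.sum_cons] at hts
  rw [htcard] at htsum
  have : (n : ℝ) < 1 + (n - 1 : ℕ) := by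
    rw [← hts]; exact add_lt_add_of_lt_of_le hrez htsum
  rw [Nat.cast_sub hn1] at this
  push_cast at this
  linarith

lemma matrix_eq_one_of_trace {n l : ℕ} (hn : 0 < n) (hl : 0 < l)
    (M : Matrix (Fin n) (Fin n) ℂ) (hM : M ^ l = 1) (htr : M.trace = n) : M = 1 := by
  haveI : Nonempty (Fin n) := ⟨⟨0, hn⟩⟩
  have hsplit : M.charpoly.Splits := IsAlgClosed.splits M.charpoly
  have hcard : M.charpoly.roots.card = n := by
    rw [(Polynomial.splits_iff_card_roots).mp hsplit, charpoly_natDegree_eq_dim,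
      Fintype.card_fin]
  have habs : ∀ z ∈ M.charpoly.roots, ‖z‖ = 1 := by
    intro z hz
    have hzl := charpoly_root_pow M hM hz
    simpa using Complex.norm_eq_one_of_pow_eq_one hzl hl.ne'
  have hsum : M.charpoly.roots.sum = (n : ℂ) := by
    rw [← Matrix.trace_eq_sum_roots_charpoly, htr]
  have hone : ∀ z ∈ M.charpoly.roots, z = 1 := multiset_all_one hcard habs hsum
  have hroots : M.charpoly.roots = Multiset.replicate n 1 :=
    Multiset.eq_replicate.mpr ⟨hcard, hone⟩
  have hcp : M.charpoly = (X - C 1) ^ n := by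
    have := hsplit.eq_prod_roots_of_monic M.charpoly_monic
    rw [hroots, Multiset.map_replicate, Multiset.prod_replicate] at this
    exact this
  -- minpoly is squarefree
  have hint : IsIntegral ℂ M := ⟨M.charpoly, M.charpoly_monic, M.aeval_self_charpoly⟩
  have hdvd1 : minpoly ℂ M ∣ (X ^ l - C 1 : ℂ[X]) := by
    apply minpoly.dvd
    rw [map_sub, map_pow, aeval_X, aeval_C, hM]
    simp
  have hsep : (X ^ l - C 1 : ℂ[X]).Separable :=
    Polynomial.separable_X_pow_sub_C 1 (by exact_mod_cast hl.ne') one_ne_zero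
  have hsqf : Squarefree (minpoly ℂ M) := hsep.squarefree.squarefree_of_dvd hdvd1
  have hdvd2 : minpoly ℂ M ∣ (X - C 1 : ℂ[X]) ^ n := by
    rw [← hcp]; exact Matrix.minpoly_dvd_charpoly M
  have hprime : Prime (X - C 1 : ℂ[X]) := (Polynomial.irreducible_X_sub_C (1:ℂ)).prime
  obtain ⟨i, hi, hassoc⟩ := (dvd_prime_pow hprime n).mp hdvd2
  have hi1 : i = 1 := by
    rcases Nat.lt_or_ge i 2 with h2 | h2
    · interval_cases i
      · exfalso
        have : IsUnit (minpoly ℂ M) := by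
          rw [pow_zero] at hassoc
          exact hassoc.symm.isUnit isUnit_one
        exact (minpoly.not_isUnit ℂ M) this
      · rfl
    · exfalso
      have hp2 : (X - C 1 : ℂ[X]) * (X - C 1) ∣ minpoly ℂ M := by
        have : (X - C 1 : ℂ[X]) ^ 2 ∣ (X - C 1) ^ i := pow_dvd_pow _ h2
        calc (X - C 1 : ℂ[X]) * (X - C 1) = (X - C 1) ^ 2 := by ring
        _ ∣ (X - C 1) ^ i := this
        _ ∣ minpoly ℂ M := hassoc.symm.dvd
      exact hprime.not_unit (hsqf _ hp2)
  rw [hi1, pow_one] at hassoc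
  have heq : minpoly ℂ M = X - C 1 :=
    Polynomial.eq_of_monic_of_associated (minpoly.monic hint) (monic_X_sub_C 1) hassoc
  have := minpoly.aeval ℂ M
  rw [heq, map_sub, aeval_X, aeval_C] at this
  have : M - 1 = 0 := by simpa using this
  linear_combination (norm := abel) this


/-- Burnside's theorem: a subgroup of `GL(V)` for a finite-dimensional complex
vector space `V`, all of whose elements satisfy `g ^ l = 1` for a fixed positive
integer `l`, is finite. -/
theorem stmt1 (V : Type*) [AddCommGroup V] [Module ℂ V] [FiniteDimensional ℂ V]
    (G : Subgroup (V ≃ₗ[ℂ] V)) (l : ℕ) (hl : 0 < l)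
    (h : ∀ g ∈ G, g ^ l = 1) :
    Finite G := by
  rcases subsingleton_or_nontrivial V with hV | hV
  · haveI : Subsingleton (V ≃ₗ[ℂ] V) := ⟨fun a b => by
      apply LinearEquiv.toLinearMap_injective
      ext x
      exact Subsingleton.elim _ _⟩
    infer_instance
  classical
  set n := Module.finrank ℂ V with hn
  have hn0 : 0 < n := Module.finrank_pos
  let b : Module.Basis (Fin n) ℂ V := Module.finBasis ℂ V
  let ρ : (V ≃ₗ[ℂ] V) →* Matrix (Fin n) (Fin n) ℂ :=
    ((LinearMap.toMatrixAlgEquiv b).toRingEquiv.toMulEquiv.toMonoidHom).comp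
      (LinearEquiv.automorphismGroup.toLinearMapMonoidHom)
  have hρinj : Function.Injective ρ := by
    intro g g' hgg
    apply LinearEquiv.toLinearMap_injective
    exact (LinearMap.toMatrixAlgEquiv b).injective hgg
  set W : Set (Matrix (Fin n) (Fin n) ℂ) := ρ '' ↑G with hW
  have hWpow : ∀ g ∈ G, (ρ g) ^ l = 1 := by
    intro g hg
    rw [← _root_.map_pow, h g hg, _root_.map_one]
  obtain ⟨s, hsW, hspan, hli⟩ := exists_linearIndependent ℂ W
  haveI : Finite s := hli.finite
  haveI : Finite {z : ℂ // z ^ l = 1} := (rootsfin l hl).to_subtype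
  set T : Set ℂ := Set.range (fun f : Fin n → {z : ℂ // z ^ l = 1} => ∑ i, (f i : ℂ)) with hT
  haveI : Finite T := (Set.finite_range _).to_subtype
  have hx_mem : ∀ (x : s) (g : G), ((ρ ↑g) * (x : Matrix (Fin n) (Fin n) ℂ)).trace ∈ T := by
    intro x g
    obtain ⟨k, hk, hkx⟩ := hsW x.2
    have hx : (ρ ↑g) * (x : Matrix (Fin n) (Fin n) ℂ) = ρ (↑g * k) := by
      rw [_root_.map_mul, hkx]
    rw [hx]
    exact trace_mem_range _ (hWpow _ (mul_mem g.2 hk))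
  let Φ : G → (s → T) := fun g x => ⟨((ρ ↑g) * (x : Matrix (Fin n) (Fin n) ℂ)).trace, hx_mem x g⟩
  have hΦinj : Function.Injective Φ := by
    intro g g' hgg
    have htr : ∀ A ∈ Submodule.span ℂ W,
        ((ρ ↑g) * A).trace = ((ρ ↑g') * A).trace := by
      intro A hA
      set φ : Matrix (Fin n) (Fin n) ℂ →ₗ[ℂ] ℂ :=
        (Matrix.traceLinearMap (Fin n) ℂ ℂ).comp (LinearMap.mulLeft ℂ (ρ ↑g - ρ ↑g')) with hφ
      have hker : Submodule.span ℂ W ≤ LinearMap.ker φ := by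
        rw [← hspan, Submodule.span_le]
        intro x hx
        have h2 : ((ρ ↑g) * x).trace = ((ρ ↑g') * x).trace :=
          congrArg Subtype.val (congrFun hgg ⟨x, hx⟩)
        simp only [SetLike.mem_coe, LinearMap.mem_ker, hφ, LinearMap.comp_apply,
          LinearMap.mulLeft_apply, Matrix.traceLinearMap_apply]
        rw [sub_mul, Matrix.trace_sub, h2, sub_self]
      have hA0 : φ A = 0 := hker hA
      simp only [hφ, LinearMap.comp_apply, LinearMap.mulLeft_apply,
        Matrix.traceLinearMap_apply, sub_mul, Matrix.trace_sub] at hA0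
      exact sub_eq_zero.mp hA0
    have hmem : ρ ((↑g : V ≃ₗ[ℂ] V)⁻¹) ∈ Submodule.span ℂ W :=
      Submodule.subset_span ⟨(↑g)⁻¹, G.inv_mem g.2, rfl⟩
    have h1 := htr _ hmem
    have hL : (ρ ↑g) * ρ ((↑g : V ≃ₗ[ℂ] V)⁻¹) = 1 := by
      rw [← _root_.map_mul, mul_inv_cancel, _root_.map_one]
    rw [hL] at h1
    set N := (ρ ↑g') * ρ ((↑g : V ≃ₗ[ℂ] V)⁻¹) with hNdef
    have hNρ : N = ρ (↑g' * (↑g : V ≃ₗ[ℂ] V)⁻¹) := by rw [_root_.map_mul]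
    have hNG : (↑g' * (↑g : V ≃ₗ[ℂ] V)⁻¹) ∈ G := mul_mem g'.2 (G.inv_mem g.2)
    have hNpow : N ^ l = 1 := by rw [hNρ]; exact hWpow _ hNG
    have hNtr : N.trace = (n : ℂ) := by
      rw [← h1, Matrix.trace_one]
      simp
    have hN1 : N = 1 := matrix_eq_one_of_trace hn0 hl N hNpow hNtr
    have hρeq : ρ (↑g' * (↑g : V ≃ₗ[ℂ] V)⁻¹) = ρ 1 := by rw [← hNρ, hN1, _root_.map_one]
    have heq1 : (↑g' * (↑g : V ≃ₗ[ℂ] V)⁻¹) = 1 := hρinj hρeq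
    have : (↑g' : V ≃ₗ[ℂ] V) = ↑g := mul_inv_eq_one.mp heq1
    exact (Subtype.ext this).symm
  exact Finite.of_injective Φ hΦinj
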